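/- Almost sure convergence of quadratic forms of empirical residuals in a Hilbert space: let ℋ be a separable real Hilbert space with orthonormal basis {e_k : k∈ℕ}, let δ′>0, and let ε be an ℋ-valued random variable with E‖ε‖²<∞; set W_{2,j,k} := E[⟨ε,e_j⟩⟨ε,e_k⟩]. Let (ε̂_{n,i})_{1≤i≤n, n∈ℕ} be a triangular array of ℋ-valued random variables such that, almost surely: n^{-1}Σ_{i=1}^n ‖ε̂_{n,i}‖² → E‖ε‖² = Σ_k W_{2,k,k}, limsup_n n^{-1}Σ_{i=1}^n ‖ε̂_{n,i}‖^{2+δ′} < ∞, and n^{-1}Σ_{i=1}^n ⟨ε̂_{n,i},e_j⟩⟨ε̂_{n,i},e_k⟩ → W_{2,j,k} for every pair j,k∈ℕ. Then for every v = Σ_k γ_k e_k ∈ ℋ, n^{-1}Σ_{i=1}^n ⟨ε̂_{n,i},v⟩² → Σ_{j,k∈ℕ} γ_j γ_k W_{2,j,k} almost surely. -/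

import Mathlib

/-!
Fix an `ω` in the almost sure event and write `Qₙ(u) = n⁻¹ Σᵢ ⟪ε̂ₙᵢ, u⟫²`. For a truncation
`v_K = Σ_{k<K} γₖ eₖ` of `v`, `Qₙ(v_K)` is a finite combination of the empirical cross-moments, so
it tends to `Σ_{j,k<K} γⱼ γₖ Wⱼₖ`. Cauchy–Schwarz gives
`|Qₙ(v) - Qₙ(v_K)| ≤ (n⁻¹ Σᵢ ‖ε̂ₙᵢ‖²) ‖v - v_K‖ (‖v‖ + ‖v_K‖)`, which is small uniformly in `n`
because the empirical second moments are eventually bounded. Finally `W` inherits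
`Wⱼₖ² ≤ Wⱼⱼ Wₖₖ` from the empirical moments; with `Σₖ Wₖₖ < ∞` this makes the double series
absolutely summable, so its square partial sums converge to it.
-/

open MeasureTheory Filter Finset
open scoped Topology RealInnerProductSpace

theorem tendsto_of_eventually_dist_le {α β X : Type*} [PseudoMetricSpace X]
    {l : Filter α} {q : Filter β} [q.NeBot] {f : α → X} {g : β → α → X} {L : β → X} {z : X}
    {δ : β → ℝ} (hg : ∀ b, Tendsto (g b) l (𝓝 (L b))) (hL : Tendsto L q (𝓝 z))
    (hδ : Tendsto δ q (𝓝 0)) (hfg : ∀ b, ∀ᶠ a in l, dist (f a) (g b a) ≤ δ b) :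
    Tendsto f l (𝓝 z) := by
  refine Metric.tendsto_nhds.2 fun η hη => ?_
  obtain ⟨b, hδb, hLb⟩ := ((hδ.eventually (eventually_lt_nhds (by positivity : 0 < η / 3))).and
    (Metric.tendsto_nhds.1 hL (η / 3) (by positivity))).exists
  filter_upwards [hfg b, Metric.tendsto_nhds.1 (hg b) (η / 3) (by positivity)] with a hfa hga
  calc dist (f a) z ≤ dist (f a) (g b a) + dist (g b a) (L b) + dist (L b) z :=
        dist_triangle4 _ _ _ _
    _ < η := by linarith

theorem Summable.tendsto_sum_range_sum_range {M : Type*} [AddCommGroup M] [UniformSpace M]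
    [IsUniformAddGroup M] [CompleteSpace M] [T0Space M] {f : ℕ → ℕ → M}
    (hf : Summable fun p : ℕ × ℕ => f p.1 p.2) :
    Tendsto (fun K => ∑ j ∈ range K, ∑ k ∈ range K, f j k) atTop (𝓝 (∑' j, ∑' k, f j k)) := by
  have hsquares : Tendsto (fun K => range K ×ˢ range K) atTop atTop := by
    refine tendsto_finsetProd_atTop.comp (f := fun K => (range K, range K)) ?_
    rw [← prod_atTop_atTop_eq]
    exact tendsto_finset_range.prodMk tendsto_finset_range
  rw [← hf.tsum_prod]
  exact (hf.hasSum.comp hsquares).congr fun K => sum_product _ _ _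

theorem summable_mul_mul_of_sq_le_mul {ι : Type*} {γ : ι → ℝ} {W : ι → ι → ℝ}
    (hγ : Summable fun k => γ k ^ 2) (hdiag : Summable fun k => W k k)
    (hnonneg : ∀ k, 0 ≤ W k k) (hcs : ∀ j k, W j k ^ 2 ≤ W j j * W k k) :
    Summable fun p : ι × ι => γ p.1 * γ p.2 * W p.1 p.2 := by
  set b : ι → ℝ := fun k => |γ k| * √(W k k)
  have hb : Summable b := by
    refine Summable.of_nonneg_of_le (fun k => by positivity) (fun k => ?_)
      ((hγ.add hdiag).div_const 2)
    have := two_mul_le_add_sq |γ k| √(W k k)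
    rw [sq_abs, Real.sq_sqrt (hnonneg k)] at this
    simp only [b]
    linarith
  refine Summable.of_norm_bounded (hb.mul_of_nonneg hb (fun k => by positivity)
    (fun k => by positivity)) fun p => ?_
  have hW : |W p.1 p.2| ≤ √(W p.1 p.1) * √(W p.2 p.2) := by
    rw [← Real.sqrt_sq_eq_abs, ← Real.sqrt_mul (hnonneg _)]
    exact Real.sqrt_le_sqrt (hcs _ _)
  calc ‖γ p.1 * γ p.2 * W p.1 p.2‖ = |γ p.1| * |γ p.2| * |W p.1 p.2| := by
        simp only [Real.norm_eq_abs, abs_mul]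
    _ ≤ |γ p.1| * |γ p.2| * (√(W p.1 p.1) * √(W p.2 p.2)) := by gcongr
    _ = b p.1 * b p.2 := by ring

theorem sq_mul_sum_mul_le_mul_sum_mul_self {ι : Type*} (c : ℝ) (s : Finset ι) (f g : ι → ℝ) :
    (c * ∑ i ∈ s, f i * g i) ^ 2 ≤ (c * ∑ i ∈ s, f i * f i) * (c * ∑ i ∈ s, g i * g i) := by
  have hcs := sum_mul_sq_le_sq_mul_sq s f g
  simp only [← sq]
  calc (c * ∑ i ∈ s, f i * g i) ^ 2 = c ^ 2 * (∑ i ∈ s, f i * g i) ^ 2 := by ring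
    _ ≤ c ^ 2 * ((∑ i ∈ s, f i ^ 2) * ∑ i ∈ s, g i ^ 2) := by gcongr
    _ = (c * ∑ i ∈ s, f i ^ 2) * (c * ∑ i ∈ s, g i ^ 2) := by ring

section InnerProductSpace

variable {H ι : Type*} [NormedAddCommGroup H] [InnerProductSpace ℝ H]

theorem abs_inner_sq_sub_inner_sq_le (x u w : H) :
    |⟪x, u⟫ ^ 2 - ⟪x, w⟫ ^ 2| ≤ ‖x‖ ^ 2 * (‖u - w‖ * (‖u‖ + ‖w‖)) := by
  have hsub : |⟪x, u⟫ - ⟪x, w⟫| ≤ ‖x‖ * ‖u - w‖ := by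
    rw [← inner_sub_right]; exact abs_real_inner_le_norm x (u - w)
  have hadd : |⟪x, u⟫ + ⟪x, w⟫| ≤ ‖x‖ * ‖u‖ + ‖x‖ * ‖w‖ :=
    (abs_add_le _ _).trans (add_le_add (abs_real_inner_le_norm x u) (abs_real_inner_le_norm x w))
  calc |⟪x, u⟫ ^ 2 - ⟪x, w⟫ ^ 2| = |⟪x, u⟫ - ⟪x, w⟫| * |⟪x, u⟫ + ⟪x, w⟫| := by
        rw [← abs_mul]; ring_nf
    _ ≤ (‖x‖ * ‖u - w‖) * (‖x‖ * ‖u‖ + ‖x‖ * ‖w‖) :=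
        mul_le_mul hsub hadd (abs_nonneg _) (by positivity)
    _ = ‖x‖ ^ 2 * (‖u - w‖ * (‖u‖ + ‖w‖)) := by ring

theorem inner_sum_smul_sq {κ : Type*} (x : H) (t : Finset κ) (γ : κ → ℝ) (b : κ → H) :
    ⟪x, ∑ k ∈ t, γ k • b k⟫ ^ 2 = ∑ j ∈ t, ∑ k ∈ t, γ j * γ k * (⟪x, b j⟫ * ⟪x, b k⟫) := by
  simp only [inner_sum, real_inner_smul_right, sq, sum_mul_sum]
  exact sum_congr rfl fun j _ => sum_congr rfl fun k _ => by ring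

theorem abs_mul_sum_inner_sq_sub_le {c : ℝ} (hc : 0 ≤ c) (s : Finset ι) (y : ι → H) (u w : H) :
    |c * ∑ i ∈ s, ⟪y i, u⟫ ^ 2 - c * ∑ i ∈ s, ⟪y i, w⟫ ^ 2| ≤
      (c * ∑ i ∈ s, ‖y i‖ ^ 2) * (‖u - w‖ * (‖u‖ + ‖w‖)) := by
  rw [← mul_sub, ← sum_sub_distrib, abs_mul, abs_of_nonneg hc, mul_assoc, sum_mul]
  gcongr
  exact (abs_sum_le_sum_abs _ _).trans (sum_le_sum fun i _ => abs_inner_sq_sub_inner_sq_le _ _ _)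

theorem mul_sum_inner_sum_smul_sq {κ : Type*} (c : ℝ) (s : Finset ι) (y : ι → H) (t : Finset κ)
    (γ : κ → ℝ) (b : κ → H) :
    c * ∑ i ∈ s, ⟪y i, ∑ k ∈ t, γ k • b k⟫ ^ 2 =
      ∑ j ∈ t, ∑ k ∈ t, γ j * γ k * (c * ∑ i ∈ s, ⟪y i, b j⟫ * ⟪y i, b k⟫) := by
  simp only [inner_sum_smul_sq, mul_sum]
  rw [sum_comm]
  refine sum_congr rfl fun j _ => ?_
  rw [sum_comm]
  exact sum_congr rfl fun k _ => sum_congr rfl fun i _ => by ring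

theorem tendsto_mul_sum_inner_sq_of_tendsto_basis {α : Type*} {l : Filter α} [l.NeBot]
    (e : HilbertBasis ℕ ℝ H) {c : α → ℝ} (hc : ∀ a, 0 ≤ c a) {s : α → Finset ι}
    {y : α → ι → H} {W : ℕ → ℕ → ℝ}
    (hbdd : IsBoundedUnder (· ≤ ·) l fun a => c a * ∑ i ∈ s a, ‖y a i‖ ^ 2)
    (hbasis : ∀ j k,
      Tendsto (fun a => c a * ∑ i ∈ s a, ⟪y a i, e j⟫ * ⟪y a i, e k⟫) l (𝓝 (W j k)))
    (hdiag : Summable fun k => W k k) (v : H) :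
    Tendsto (fun a => c a * ∑ i ∈ s a, ⟪y a i, v⟫ ^ 2) l
      (𝓝 (∑' j, ∑' k, ⟪v, e j⟫ * ⟪v, e k⟫ * W j k)) := by
  set γ : ℕ → ℝ := fun k => ⟪v, e k⟫
  have hnonneg : ∀ k, 0 ≤ W k k := fun k => ge_of_tendsto' (hbasis k k) fun a =>
    mul_nonneg (hc a) (sum_nonneg fun i _ => mul_self_nonneg _)
  have hcs : ∀ j k, W j k ^ 2 ≤ W j j * W k k := fun j k =>
    le_of_tendsto_of_tendsto' ((hbasis j k).pow 2) ((hbasis j j).mul (hbasis k k)) fun a =>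
      sq_mul_sum_mul_le_mul_sum_mul_self _ _ _ _
  have hγ : Summable fun k => γ k ^ 2 :=
    (e.summable_inner_mul_inner v v).congr fun k => by rw [real_inner_comm v (e k), sq]
  have hv : Tendsto (fun K => ∑ k ∈ range K, γ k • e k) atTop (𝓝 v) := by
    refine ((e.hasSum_repr v).congr_fun fun k => ?_).tendsto_sum_nat
    rw [e.repr_apply_apply, real_inner_comm]
  obtain ⟨C, hC⟩ := hbdd.eventually_le
  refine tendsto_of_eventually_dist_le (q := atTop)
    (g := fun K a => c a * ∑ i ∈ s a, ⟪y a i, ∑ k ∈ range K, γ k • e k⟫ ^ 2)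
    (δ := fun K => C * (‖v - ∑ k ∈ range K, γ k • e k‖ * (‖v‖ + ‖∑ k ∈ range K, γ k • e k‖)))
    (fun K => ?_) (summable_mul_mul_of_sq_le_mul hγ hdiag hnonneg hcs).tendsto_sum_range_sum_range
    ?_ (fun K => ?_)
  · simp only [mul_sum_inner_sum_smul_sq]
    exact tendsto_finsetSum _ fun j _ => tendsto_finsetSum _ fun k _ =>
      (hbasis j k).const_mul _
  · simpa using ((hv.const_sub v).norm.mul (tendsto_const_nhds.add hv.norm)).const_mul C
  · filter_upwards [hC] with a ha
    rw [Real.dist_eq]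
    exact (abs_mul_sum_inner_sq_sub_le (hc a) _ _ _ _).trans
      (mul_le_mul_of_nonneg_right ha (by positivity))

end InnerProductSpace

theorem quadratic_forms_empirical_residuals_general
    {H : Type} [NormedAddCommGroup H] [InnerProductSpace ℝ H]
    (e : HilbertBasis ℕ ℝ H)
    {Ω : Type} [MeasurableSpace Ω] (μ : Measure Ω)
    (δ' : ℝ)
    (ε : Ω → H)
    (W : ℕ → ℕ → ℝ)
    (hWsum : HasSum (fun k => W k k) (∫ ω, ‖ε ω‖ ^ 2 ∂μ))
    (ehat : ℕ → ℕ → Ω → H)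
    (hae : ∀ᵐ ω ∂μ,
      Tendsto (fun n : ℕ => (n : ℝ)⁻¹ * ∑ i ∈ Finset.Icc 1 n, ‖ehat n i ω‖ ^ 2)
          atTop (𝓝 (∫ ω', ‖ε ω'‖ ^ 2 ∂μ)) ∧
      IsBoundedUnder (· ≤ ·) atTop
        (fun n : ℕ => (n : ℝ)⁻¹ * ∑ i ∈ Finset.Icc 1 n, ‖ehat n i ω‖ ^ (2 + δ')) ∧
      ∀ j k : ℕ,
        Tendsto (fun n : ℕ => (n : ℝ)⁻¹ *
            ∑ i ∈ Finset.Icc 1 n, ⟪ehat n i ω, e j⟫ * ⟪ehat n i ω, e k⟫)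
          atTop (𝓝 (W j k)))
    (v : H) :
    ∀ᵐ ω ∂μ,
      Tendsto (fun n : ℕ => (n : ℝ)⁻¹ * ∑ i ∈ Finset.Icc 1 n, ⟪ehat n i ω, v⟫ ^ 2)
        atTop (𝓝 (∑' (j : ℕ), ∑' (k : ℕ), ⟪v, e j⟫ * ⟪v, e k⟫ * W j k)) := by
  filter_upwards [hae] with ω ⟨hnorm, _, hbasis⟩
  exact tendsto_mul_sum_inner_sq_of_tendsto_basis e (fun n => by positivity)
    hnorm.isBoundedUnder_le hbasis hWsum.summable v

/-- **Almost sure convergence of quadratic forms of empirical residuals in a Hilbert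
space**: if a.s. `n⁻¹Σᵢ‖ε̂_{n,i}‖² → E‖ε‖² = Σ_k W_{k,k}`, the `(2+δ')`-th empirical
moments stay bounded, and `n⁻¹Σᵢ⟨ε̂_{n,i},e_j⟩⟨ε̂_{n,i},e_k⟩ → W_{j,k}` for every `j,k`,
then for every `v = Σ_k γ_k e_k ∈ ℋ`,
`n⁻¹Σᵢ⟨ε̂_{n,i},v⟩² → Σ_{j,k} γ_j γ_k W_{j,k}` almost surely. -/
theorem quadratic_forms_empirical_residuals
    {H : Type} [NormedAddCommGroup H] [InnerProductSpace ℝ H] [CompleteSpace H]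
    (e : HilbertBasis ℕ ℝ H)
    {Ω : Type} [MeasurableSpace Ω] (μ : Measure Ω) [IsProbabilityMeasure μ]
    (δ' : ℝ) (hδ' : 0 < δ')
    (ε : Ω → H) (hε2 : Integrable (fun ω => ‖ε ω‖ ^ 2) μ)
    (W : ℕ → ℕ → ℝ)
    (hW : ∀ j k, W j k = ∫ ω, ⟪ε ω, e j⟫ * ⟪ε ω, e k⟫ ∂μ)
    (hWsum : HasSum (fun k => W k k) (∫ ω, ‖ε ω‖ ^ 2 ∂μ))
    (ehat : ℕ → ℕ → Ω → H)
    (hae : ∀ᵐ ω ∂μ,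
      Tendsto (fun n : ℕ => (n : ℝ)⁻¹ * ∑ i ∈ Finset.Icc 1 n, ‖ehat n i ω‖ ^ 2)
          atTop (𝓝 (∫ ω', ‖ε ω'‖ ^ 2 ∂μ)) ∧
      IsBoundedUnder (· ≤ ·) atTop
        (fun n : ℕ => (n : ℝ)⁻¹ * ∑ i ∈ Finset.Icc 1 n, ‖ehat n i ω‖ ^ (2 + δ')) ∧
      ∀ j k : ℕ,
        Tendsto (fun n : ℕ => (n : ℝ)⁻¹ *
            ∑ i ∈ Finset.Icc 1 n, ⟪ehat n i ω, e j⟫ * ⟪ehat n i ω, e k⟫)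
          atTop (𝓝 (W j k)))
    (v : H) :
    ∀ᵐ ω ∂μ,
      Tendsto (fun n : ℕ => (n : ℝ)⁻¹ * ∑ i ∈ Finset.Icc 1 n, ⟪ehat n i ω, v⟫ ^ 2)
        atTop (𝓝 (∑' (j : ℕ), ∑' (k : ℕ), ⟪v, e j⟫ * ⟪v, e k⟫ * W j k)) :=
  quadratic_forms_empirical_residuals_general e μ δ' ε W hWsum ehat hae v
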